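/- arXiv:1601.02030 — 5 statements merged into one kernel-verified Lean document; each statement's English description precedes it below -/
import Mathlib

section
/- Every face of a zonotope is, up to translation, again a zonotope generated by a subset of the original segments: if Σ̄ = [v₁,w₁] + ... + [v_d,w_d] is a Minkowski sum of segments in a real vector space, then every face F of Σ̄ has the form F = p₁ + ... + p_k + [v_{σ(k+1)}, w_{σ(k+1)}] + ... + [v_{σ(d)}, w_{σ(d)}] where σ is a permutation of {1,...,d} and each p_j is an endpoint of the segment [v_{σ(j)}, w_{σ(j)}]. -/
/-- Every face of a Minkowski sum of segments `[vᵢ, wᵢ]` is, up to choosing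
endpoints for some of the segments, the sum of those endpoints together with the Minkowski
sum of the remaining full segments. -/
theorem stmt2 {V : Type*} [AddCommGroup V] [Module ℝ V] {d : ℕ} (v w : Fin d → V)
    (Sig : Set V)
    (hSig : Sig = {x : V | ∃ t : Fin d → ℝ, (∀ i, t i ∈ Set.Icc (0 : ℝ) 1) ∧
      x = ∑ i, (t i • v i + (1 - t i) • w i)})
    (F : Set V) (φ : V →ₗ[ℝ] ℝ)
    (hF : F = {x ∈ Sig | ∀ y ∈ Sig, φ y ≤ φ x}) :
    ∃ S : Finset (Fin d), ∃ p : Fin d → V, (∀ i ∈ S, p i = v i ∨ p i = w i) ∧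
      F = {x : V | ∃ t : Fin d → ℝ, (∀ i, t i ∈ Set.Icc (0 : ℝ) 1) ∧
        x = (∑ i ∈ S, p i) + ∑ i ∈ Sᶜ, (t i • v i + (1 - t i) • w i)} := by
  classical
  subst hSig hF
  set S : Finset (Fin d) := Finset.univ.filter (fun i => φ (v i) ≠ φ (w i)) with hS
  set p : Fin d → V := fun i => if φ (w i) < φ (v i) then v i else w i with hp
  set M : ℝ := ∑ i, max (φ (v i)) (φ (w i)) with hM
  have hterm : ∀ (t : Fin d → ℝ), ∀ i, t i ∈ Set.Icc (0:ℝ) 1 →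
      t i * φ (v i) + (1 - t i) * φ (w i) ≤ max (φ (v i)) (φ (w i)) := by
    rintro t i ⟨h0, h1⟩
    have hv := le_max_left (φ (v i)) (φ (w i))
    have hw := le_max_right (φ (v i)) (φ (w i))
    nlinarith
  have hφsum : ∀ t : Fin d → ℝ, φ (∑ i, (t i • v i + (1 - t i) • w i)) =
      ∑ i, (t i * φ (v i) + (1 - t i) * φ (w i)) := by
    intro t; simp [map_sum]
  have hle : ∀ t : Fin d → ℝ, (∀ i, t i ∈ Set.Icc (0:ℝ) 1) →
      φ (∑ i, (t i • v i + (1 - t i) • w i)) ≤ M := by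
    intro t ht
    rw [hφsum]
    exact Finset.sum_le_sum fun i _ => hterm t i (ht i)
  set topt : Fin d → ℝ := fun i => if φ (w i) < φ (v i) then 1 else 0 with htopt
  have htopt_mem : ∀ i, topt i ∈ Set.Icc (0:ℝ) 1 := by
    intro i; by_cases h : φ (w i) < φ (v i) <;> simp [htopt, h]
  have htopt_term : ∀ i, topt i • v i + (1 - topt i) • w i = p i := by
    intro i; by_cases h : φ (w i) < φ (v i) <;> simp [htopt, hp, h]
  have htopt_val : ∀ i, topt i * φ (v i) + (1 - topt i) * φ (w i)
      = max (φ (v i)) (φ (w i)) := by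
    intro i; by_cases h : φ (w i) < φ (v i)
    · simp [htopt, h, max_eq_left (le_of_lt h)]
    · simp [htopt, h, max_eq_right (not_lt.mp h)]
  refine ⟨S, p, ?_, ?_⟩
  · intro i _; by_cases h : φ (w i) < φ (v i) <;> simp [hp, h]
  ext x
  simp only [Set.mem_setOf_eq, Set.mem_sep_iff]
  constructor
  · rintro ⟨⟨t, ht, rfl⟩, hmax⟩
    have hMle : M ≤ φ (∑ i, (t i • v i + (1 - t i) • w i)) := by
      have hin : (∑ i, (topt i • v i + (1 - topt i) • w i)) ∈
          {x : V | ∃ t : Fin d → ℝ, (∀ i, t i ∈ Set.Icc (0 : ℝ) 1) ∧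
            x = ∑ i, (t i • v i + (1 - t i) • w i)} := ⟨topt, htopt_mem, rfl⟩
      have := hmax _ hin
      rwa [hφsum topt, Finset.sum_congr rfl (fun i _ => htopt_val i)] at this
    have hsumeq : ∑ i, (t i * φ (v i) + (1 - t i) * φ (w i)) = M := by
      have := hle t ht
      rw [hφsum] at hMle this
      linarith
    have heach : ∀ i ∈ Finset.univ, t i * φ (v i) + (1 - t i) * φ (w i)
        = max (φ (v i)) (φ (w i)) :=
      (Finset.sum_eq_sum_iff_of_le (fun i _ => hterm t i (ht i))).mp hsumeq
    have hSterm : ∀ i ∈ S, t i • v i + (1 - t i) • w i = p i := by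
      intro i hi
      have hne : φ (v i) ≠ φ (w i) := (Finset.mem_filter.mp hi).2
      have heq := heach i (Finset.mem_univ i)
      by_cases h : φ (w i) < φ (v i)
      · rw [max_eq_left (le_of_lt h)] at heq
        have ht1 : t i = 1 := by
          have h0 : (t i - 1) * (φ (v i) - φ (w i)) = 0 := by linear_combination heq
          rcases mul_eq_zero.mp h0 with h' | h'
          · linarith
          · exact absurd (by linarith : φ (v i) = φ (w i)) hne
        simp [ht1, hp, h]
      · have hlt : φ (v i) < φ (w i) := lt_of_le_of_ne (not_lt.mp h) hne
        rw [max_eq_right (le_of_lt hlt)] at heq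
        have ht0 : t i = 0 := by
          have h0 : t i * (φ (v i) - φ (w i)) = 0 := by linear_combination heq
          rcases mul_eq_zero.mp h0 with h' | h'
          · exact h'
          · exact absurd (by linarith : φ (v i) = φ (w i)) hne
        simp [ht0, hp, h]
    refine ⟨t, ht, ?_⟩
    rw [← Finset.sum_add_sum_compl S (fun i => t i • v i + (1 - t i) • w i),
      Finset.sum_congr rfl hSterm]
  · rintro ⟨t, ht, rfl⟩
    set t' : Fin d → ℝ := fun i => if i ∈ S then topt i else t i with ht'
    have ht'mem : ∀ i, t' i ∈ Set.Icc (0:ℝ) 1 := by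
      intro i; by_cases h : i ∈ S <;> simp only [ht', h, if_true, if_false]
      · exact htopt_mem i
      · exact ht i
    have hxeq : (∑ i ∈ S, p i) + ∑ i ∈ Sᶜ, (t i • v i + (1 - t i) • w i)
        = ∑ i, (t' i • v i + (1 - t' i) • w i) := by
      rw [← Finset.sum_add_sum_compl S (fun i => t' i • v i + (1 - t' i) • w i)]
      congr 1
      · refine Finset.sum_congr rfl fun i hi => ?_
        simp only [ht', hi, if_true]
        exact (htopt_term i).symm
      · refine Finset.sum_congr rfl fun i hi => ?_
        have : i ∉ S := Finset.mem_compl.mp hi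
        simp only [ht', this, if_false]
    have hφx : φ ((∑ i ∈ S, p i) + ∑ i ∈ Sᶜ, (t i • v i + (1 - t i) • w i)) = M := by
      rw [hxeq, hφsum]
      refine Finset.sum_congr rfl fun i _ => ?_
      by_cases h : i ∈ S
      · simp only [ht', h, if_true]; exact htopt_val i
      · have heq : φ (v i) = φ (w i) := by
          by_contra hne
          exact h (Finset.mem_filter.mpr ⟨Finset.mem_univ i, hne⟩)
        simp only [ht', h, if_false, heq, max_self]
        ring
    refine ⟨⟨t', ht'mem, hxeq⟩, ?_⟩
    rintro y ⟨s, hs, rfl⟩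
    rw [hφx]
    exact hle s hs
end

section
/- Let η: N → ℝ≥0 be defined by η_λ = ⟨λ, L^{λ>0}⟩ where L = [X^∨] - [𝔤^∨] as a virtual T-representation and L^{λ>0} is its projection to the weights pairing positively with λ. If X is quasi-symmetric, then η_λ = η_{-λ} for every cocharacter λ, and η_{wλ} = η_λ for every w in the Weyl group W. -/
open scoped Classical

/-!
Summing the quasi-symmetry relations over the lines spanned by the `βᵢ` gives `∑ βᵢ = 0`, and
the roots sum to zero since they are stable under negation. For a finite family of reals with
sum zero, the positive terms and the negated negative terms have the same sum, which gives
`η_{-λ} = η_λ`. Weyl invariance holds because `W` permutes both weight multisets.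
-/

open Finset

theorem sum_filter_pos_neg_eq_of_sum_eq_zero {ι : Type*} (s : Finset ι) (f : ι → ℝ)
    (hf : ∑ i ∈ s, f i = 0) :
    ∑ i ∈ s with 0 < -f i, -f i = ∑ i ∈ s with 0 < f i, f i := by
  have hsplit : ∑ i ∈ s with 0 < f i, f i - ∑ i ∈ s with 0 < -f i, -f i = ∑ i ∈ s, f i := by
    rw [sum_filter, sum_filter, ← sum_sub_distrib]
    refine sum_congr rfl fun i _ => ?_
    split_ifs <;> linarith
  linarith

theorem sum_eq_zero_of_perm_eq_neg {ι V : Type*} [Fintype ι] [AddCommGroup V]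
    [IsAddTorsionFree V] (v : ι → V) (τ : Equiv.Perm ι) (hτ : ∀ i, v (τ i) = -v i) :
    ∑ i, v i = 0 :=
  self_eq_neg.mp <| calc
    ∑ i, v i = ∑ i, v (τ i) := (Equiv.sum_comp τ v).symm
    _ = -∑ i, v i := by simp only [hτ, sum_neg_distrib]

section QuasiSymmetric

variable {K V ι : Type*} [DivisionRing K] [AddCommGroup V] [Module K V] [Fintype ι]

theorem sum_filter_span_eq_sum_filter_mem_span (β : ι → V) (i₀ : ι) :
    ∑ i with K ∙ β i = K ∙ β i₀, β i = ∑ i with β i ∈ K ∙ β i₀, β i := by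
  refine sum_subset (fun i hi => ?_) (fun i hi hni => ?_)
  · simp only [mem_filter, mem_univ, true_and] at hi ⊢
    exact hi ▸ Submodule.mem_span_singleton_self (β i)
  · simp only [mem_filter, mem_univ, true_and] at hi hni
    obtain ⟨c, hc⟩ := Submodule.mem_span_singleton.mp hi
    -- a nonzero multiple of `β i₀` spans the same line, so only `β i = 0` can be missing
    rcases eq_or_ne c 0 with rfl | hc0
    · rw [← hc, zero_smul]
    · exact absurd (hc ▸ Submodule.span_singleton_smul_eq (IsUnit.mk0 c hc0) _) hni

theorem sum_eq_zero_of_sum_filter_mem_span_eq_zero (β : ι → V)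
    (hqs : ∀ v : V, ∑ i with β i ∈ K ∙ v, β i = 0) :
    ∑ i, β i = 0 := by
  have hmaps : ∀ i ∈ (univ : Finset ι), (K ∙ β i) ∈ univ.image fun i => K ∙ β i :=
    fun i _ => mem_image_of_mem _ (mem_univ i)
  rw [← sum_fiberwise_of_maps_to hmaps β]
  refine sum_eq_zero fun s hs => ?_
  obtain ⟨i₀, -, rfl⟩ := mem_image.mp hs
  rw [sum_filter_span_eq_sum_filter_mem_span, hqs]

end QuasiSymmetric

section PositivePairing

variable {V ι : Type*} [AddCommGroup V] [Module ℝ V] [Fintype ι]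

/-- `⟨λ, A^{λ>0}⟩` for the weight multiset `A = {vᵢ}` and the cocharacter `λ = l`. -/
noncomputable def positivePairing (l : V →ₗ[ℝ] ℝ) (v : ι → V) : ℝ :=
  ∑ i with 0 < l (v i), l (v i)

theorem positivePairing_neg_left (l : V →ₗ[ℝ] ℝ) (v : ι → V) (hv : ∑ i, v i = 0) :
    positivePairing (-l) v = positivePairing l v := by
  refine sum_filter_pos_neg_eq_of_sum_eq_zero univ (fun i => l (v i)) ?_
  rw [← map_sum, hv, map_zero]

theorem positivePairing_comp_symm (l : V →ₗ[ℝ] ℝ) (v : ι → V) (g : V ≃ₗ[ℝ] V)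
    (σ : Equiv.Perm ι) (hσ : ∀ i, v (σ i) = g (v i)) :
    positivePairing (l.comp g.symm.toLinearMap) v = positivePairing l v := by
  have hl : ∀ i, l.comp g.symm.toLinearMap (v (σ i)) = l (v i) := fun i => by
    simp [hσ i]
  unfold positivePairing
  rw [sum_filter, sum_filter]
  exact (Fintype.sum_equiv σ _ _ fun i => by rw [hl i]).symm

end PositivePairing

/-- With `η_λ = ⟨λ, L^{λ>0}⟩` for `L = [X^∨] - [𝔤^∨]` (weights `-βᵢ` from
`X^∨` and `-αⱼ` from `𝔤^∨`), if `X` is quasi-symmetric then `η_λ = η_{-λ}` for every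
cocharacter `λ`, and `η_{wλ} = η_λ` for every Weyl group element `w`. -/
theorem stmt9 {V : Type*} [AddCommGroup V] [Module ℝ V]
    {W : Type*} [Group W] (φ : W →* (V ≃ₗ[ℝ] V))
    {d m : ℕ} (β : Fin d → V) (α : Fin m → V)
    (hqs : ∀ v : V,
      ∑ i ∈ Finset.univ.filter (fun i => β i ∈ Submodule.span ℝ ({v} : Set V)), β i = 0)
    (hβW : ∀ w : W, ∃ σ : Equiv.Perm (Fin d), ∀ i, β (σ i) = φ w (β i))
    (hαW : ∀ w : W, ∃ σ : Equiv.Perm (Fin m), ∀ j, α (σ j) = φ w (α j))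
    (hαneg : ∃ τ : Equiv.Perm (Fin m), ∀ j, α (τ j) = -(α j))
    (η : (V →ₗ[ℝ] ℝ) → ℝ)
    (hη : ∀ l : V →ₗ[ℝ] ℝ, η l =
      (∑ i ∈ Finset.univ.filter (fun i => 0 < l (-(β i))), l (-(β i))) -
      (∑ j ∈ Finset.univ.filter (fun j => 0 < l (-(α j))), l (-(α j)))) :
    (∀ l : V →ₗ[ℝ] ℝ, η (-l) = η l) ∧
    (∀ (l : V →ₗ[ℝ] ℝ) (w : W),
      η (l.comp ((φ w).symm : V ≃ₗ[ℝ] V).toLinearMap) = η l) := by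
  have hη' : ∀ l, η l = positivePairing l (-β) - positivePairing l (-α) := hη
  have hβ0 : ∑ i, (-β) i = 0 := by
    simp only [Pi.neg_apply, sum_neg_distrib, sum_eq_zero_of_sum_filter_mem_span_eq_zero β hqs,
      neg_zero]
  have hα0 : ∑ j, (-α) j = 0 := by
    obtain ⟨τ, hτ⟩ := hαneg
    have : IsAddTorsionFree V := .of_isTorsionFree ℝ V
    simp only [Pi.neg_apply, sum_neg_distrib, sum_eq_zero_of_perm_eq_neg α τ hτ, neg_zero]
  refine ⟨fun l => ?_, fun l w => ?_⟩
  · rw [hη', hη', positivePairing_neg_left l _ hβ0, positivePairing_neg_left l _ hα0]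
  · obtain ⟨σ, hσ⟩ := hβW w
    obtain ⟨ρ, hρ⟩ := hαW w
    rw [hη', hη', positivePairing_comp_symm l (-β) (φ w) σ (by simp [hσ]),
      positivePairing_comp_symm l (-α) (φ w) ρ (by simp [hρ])]
end

section
/- (Lemma 'polytopes', one direction.) Suppose ε ∈ M_ℝ^W is generic for Σ̄ and χ is a dominant weight with χ ∈ -ρ + ½Σ̄_ε, where Σ̄_ε = ∪_{r>0} Σ̄ ∩ (rε + Σ̄). Then for every cocharacter λ with ⟨λ,ε⟩ > 0, one has -η_λ/2 < ⟨λ,χ⟩ ≤ η_λ/2; i.e., χ ∈ ∇_ε. Here for dominant λ, η_λ/2 = ½max{⟨λ,μ⟩ : μ ∈ Σ̄} - ⟨λ,ρ⟩, and the general case follows from W-invariance of η and of Σ̄ together with the inequality ⟨λ,χ⟩ ≥ ⟨wλ,χ⟩ ≥ ⟨w₀λ,χ⟩ for dominant λ, χ. -/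
open scoped RealInnerProductSpace

/-- Lemma `polytopes`, one direction: with `ε ∈ M_ℝ^W` generic for the
`W`-invariant symmetric zonotope `Σ̄` and `χ` a dominant weight with
`χ ∈ -ρ + ½Σ̄_ε` where `Σ̄_ε = ⋃_{r>0} Σ̄ ∩ (rε + Σ̄)`, one has
`-η_λ/2 < ⟨λ,χ⟩ ≤ η_λ/2` for every `λ` with `⟨λ,ε⟩ > 0`; i.e. `χ ∈ ∇_ε`.  Here for
dominant `λ`, `η_λ/2 = ½ max⟨λ,Σ̄⟩ - ⟨λ,ρ⟩`, `η` is `W`-invariant and symmetric, and one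
uses `⟨λ,χ⟩ ≥ ⟨wλ,χ⟩ ≥ ⟨w₀λ,χ⟩` for dominant `λ, χ`. -/
theorem stmt11 {V : Type*} [NormedAddCommGroup V] [InnerProductSpace ℝ V]
    [FiniteDimensional ℝ V]
    {W : Type*} [Group W] [Finite W] (φ : W →* (V ≃ₗᵢ[ℝ] V))
    (D : Set V) (ρ : V) (w₀ : W)
    (Sig : Set V) (hSigcpt : IsCompact Sig) (hSigconv : Convex ℝ Sig)
    (hSigW : ∀ w : W, (φ w) '' Sig = Sig) (hSigsymm : Sig = -Sig)
    (η : V → ℝ)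
    (hηW : ∀ (w : W) (l : V), η (φ w l) = η l)
    (hηsymm : ∀ l : V, η (-l) = η l)
    (hηdom : ∀ l ∈ D, η l / 2 =
      (1 / 2) * sSup ((fun μ => ⟪l, μ⟫) '' Sig) - ⟪l, ρ⟫)
    (hfirst : ∀ lam χ : V, lam ∈ D → χ ∈ D → ∀ w : W, ⟪φ w lam, χ⟫ ≤ ⟪lam, χ⟫)
    (hlast : ∀ lam χ : V, lam ∈ D → χ ∈ D → ∀ w : W, ⟪φ w₀ lam, χ⟫ ≤ ⟪φ w lam, χ⟫)
    (hDorbit : ∀ l : V, ∃ w : W, φ w l ∈ D)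
    (ε : V) (hεW : ∀ w : W, φ w ε = ε)
    (hεspan : ε ∈ Submodule.span ℝ Sig)
    (hεgen : ∀ F : Set V,
      (∃ l : V, F = {x ∈ Sig | ∀ y ∈ Sig, ⟪l, y⟫ ≤ ⟪l, x⟫}) → F ≠ Sig →
      ε ∉ Submodule.span ℝ {z : V | ∃ x ∈ F, ∃ y ∈ F, z = x - y})
    (χ : V) (hχD : χ ∈ D)
    (hχ : χ ∈ (fun x => -ρ + (2⁻¹ : ℝ) • x) ''
      (⋃ r ∈ Set.Ioi (0 : ℝ), Sig ∩ ((fun y => r • ε + y) '' Sig))) :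
    ∀ lam : V, 0 < ⟪lam, ε⟫ → (-(η lam) / 2 < ⟪lam, χ⟫ ∧ ⟪lam, χ⟫ ≤ η lam / 2) := by
  obtain ⟨x, hxmem, hχeq⟩ := hχ
  simp only [Set.mem_iUnion, Set.mem_inter_iff, Set.mem_image, Set.mem_Ioi,
    exists_prop] at hxmem
  obtain ⟨r, hr, hxS, y, hyS, hxy⟩ := hxmem
  intro lam hlam
  have hbdd : ∀ l : V, BddAbove ((fun μ => ⟪l, μ⟫) '' Sig) := fun l =>
    (hSigcpt.image (continuous_const.inner continuous_id)).bddAbove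
  have hinv : ∀ (w : W) (v : V), φ w⁻¹ (φ w v) = v := by
    intro w v
    have h1 : φ w⁻¹ * φ w = 1 := by rw [← map_mul, inv_mul_cancel, map_one]
    have h2 := congrArg (fun e : V ≃ₗᵢ[ℝ] V => e v) h1
    simpa [LinearIsometryEquiv.mul_def] using h2
  -- χ in terms of x
  have hχval : ∀ l : V, ⟪l, χ⟫ = -⟪l, ρ⟫ + 2⁻¹ * ⟪l, x⟫ := by
    intro l
    rw [← hχeq]
    simp [inner_add_right, inner_smul_right, inner_neg_right]
  -- nonstrict bound for any u
  have main : ∀ u : V, ⟪u, χ⟫ ≤ η u / 2 := by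
    intro u
    obtain ⟨w, hw⟩ := hDorbit u
    have h1 : ⟪u, χ⟫ ≤ ⟪φ w u, χ⟫ := by
      have := hfirst (φ w u) χ hw hχD w⁻¹
      rwa [hinv w u] at this
    have h2 : ⟪φ w u, x⟫ ≤ sSup ((fun μ => ⟪φ w u, μ⟫) '' Sig) :=
      le_csSup (hbdd _) ⟨x, hxS, rfl⟩
    have h3 := hηdom (φ w u) hw
    have h4 := hχval (φ w u)
    have h5 := hηW w u
    calc ⟪u, χ⟫ ≤ ⟪φ w u, χ⟫ := h1
      _ ≤ η u / 2 := by rw [h4, ← h5]; rw [h3]; linarith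
  -- strict bound for u with ⟪u, ε⟫ < 0
  have mainstrict : ∀ u : V, ⟪u, ε⟫ < 0 → ⟪u, χ⟫ < η u / 2 := by
    intro u hu
    obtain ⟨w, hw⟩ := hDorbit u
    have h1 : ⟪u, χ⟫ ≤ ⟪φ w u, χ⟫ := by
      have := hfirst (φ w u) χ hw hχD w⁻¹
      rwa [hinv w u] at this
    have hε' : ⟪φ w u, ε⟫ < 0 := by
      rw [← hεW w, LinearIsometryEquiv.inner_map_map]; exact hu
    have h2 : ⟪φ w u, x⟫ < ⟪φ w u, y⟫ := by
      rw [← hxy]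
      rw [inner_add_right, inner_smul_right]
      nlinarith
    have h2' : ⟪φ w u, y⟫ ≤ sSup ((fun μ => ⟪φ w u, μ⟫) '' Sig) :=
      le_csSup (hbdd _) ⟨y, hyS, rfl⟩
    have h3 := hηdom (φ w u) hw
    have h4 := hχval (φ w u)
    have h5 := hηW w u
    calc ⟪u, χ⟫ ≤ ⟪φ w u, χ⟫ := h1
      _ < η u / 2 := by rw [h4, ← h5]; rw [h3]; linarith
  constructor
  · have := mainstrict (-lam) (by rw [inner_neg_left]; linarith)
    rw [hηsymm, inner_neg_left] at this
    linarith
  · exact main lam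
end

section
/- (Lemma 'minimal-path-relation'.) Let 𝒜 be a locally finite hyperplane arrangement in V with cells the components of the complement. Let δ₁, …, δ_{n+1} be points in cells such that consecutive δ_i, δ_{i+1} lie in adjacent cells (separated by exactly one hyperplane H_i), and suppose the path is minimal: n equals the number of hyperplanes separating δ₁ from δ_{n+1}. Then for each i, the vector δ_{n+1} − δ₁ crosses H_i in the same direction as δ_{i+1} − δ_i; that is, δ₁ and δ_i lie on the same side of H_i, and δ_{i+1},…,δ_{n+1} all lie on the other side. -/
private lemma sign_iff_aux {x y : ℝ} (hx : x ≠ 0) (hy : y ≠ 0) :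
    x * y < 0 ↔ ¬((x < 0) ↔ (y < 0)) := by
  rcases hx.lt_or_gt with hx | hx <;> rcases hy.lt_or_gt with hy | hy <;>
    simp [hx, hy, asymm hx, asymm hy] <;> nlinarith

/-- Lemma `minimal-path-relation`: in a locally finite affine hyperplane
arrangement `{fᵢ = cᵢ}`, let `δ₀, …, δ_n` be points off the hyperplanes with consecutive
points in adjacent cells (separated by exactly the hyperplane `s k`), and suppose the
chain is minimal: `n` equals the number of hyperplanes separating `δ₀` from `δ_n`.  Then
for each `k`, the points `δ₀, …, δ_k` all lie on one side of the hyperplane `s k` and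
`δ_{k+1}, …, δ_n` all lie on the other side; in particular `δ_n - δ₀` crosses `s k` in the
same direction as `δ_{k+1} - δ_k`. -/
theorem stmt15 {V : Type*} [NormedAddCommGroup V] [NormedSpace ℝ V]
    {ι : Type*} (f : ι → V →ₗ[ℝ] ℝ) (c : ι → ℝ)
    (hlf : ∀ p q : V, {i : ι | (f i p - c i) * (f i q - c i) < 0}.Finite)
    {n : ℕ} (δ : Fin (n + 1) → V)
    (hoff : ∀ k, ∀ i, f i (δ k) ≠ c i)
    (s : Fin n → ι)
    (hadj : ∀ k : Fin n, ∀ i : ι,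
      ((f i (δ k.castSucc) - c i) * (f i (δ k.succ) - c i) < 0 ↔ i = s k))
    (hmin : {i : ι | (f i (δ 0) - c i) * (f i (δ (Fin.last n)) - c i) < 0}.ncard = n) :
    ∀ k : Fin n, ∀ j : Fin (n + 1),
      ((j : ℕ) ≤ (k : ℕ) → (f (s k) (δ j) < c (s k) ↔ f (s k) (δ 0) < c (s k))) ∧
      ((k : ℕ) < (j : ℕ) →
        (f (s k) (δ j) < c (s k) ↔ f (s k) (δ (Fin.last n)) < c (s k))) := by
  classical
  have hne : ∀ (j : Fin (n+1)) (i : ι), f i (δ j) - c i ≠ 0 :=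
    fun j i => sub_ne_zero.2 (hoff j i)
  have hadj' : ∀ (k : Fin n) (i : ι),
      ((f i (δ k.castSucc) < c i ↔ f i (δ k.succ) < c i)) ↔ i ≠ s k := by
    intro k i
    have := (hadj k i).symm.trans (sign_iff_aux (hne k.castSucc i) (hne k.succ i))
    have h1 : f i (δ k.castSucc) - c i < 0 ↔ f i (δ k.castSucc) < c i := sub_neg
    have h2 : f i (δ k.succ) - c i < 0 ↔ f i (δ k.succ) < c i := sub_neg
    rw [h1, h2] at this
    tauto
  have key : ∀ (i : ι) (a : ℕ) (ha : a ≤ n) (b : ℕ) (hab : a ≤ b) (hb : b ≤ n),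
      (∀ m : Fin n, a ≤ (m : ℕ) → (m : ℕ) < b → i ≠ s m) →
      (f i (δ ⟨a, Nat.lt_succ_of_le ha⟩) < c i ↔ f i (δ ⟨b, Nat.lt_succ_of_le hb⟩) < c i) := by
    intro i a ha b hab
    induction b, hab using Nat.le_induction with
    | base => intro _ _; rfl
    | succ b hb ih =>
      intro hb1 hno
      have hbn : b < n := hb1
      have step : f i (δ (⟨b, hbn⟩ : Fin n).castSucc) < c i ↔
          f i (δ (⟨b, hbn⟩ : Fin n).succ) < c i :=
        (hadj' ⟨b, hbn⟩ i).2 (hno ⟨b, hbn⟩ hb (Nat.lt_succ_self b))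
      have ih' := ih hbn.le (fun m h1 h2 => hno m h1 (h2.trans (Nat.lt_succ_self b)))
      exact ih'.trans step
  set S := {i : ι | (f i (δ 0) - c i) * (f i (δ (Fin.last n)) - c i) < 0} with hS
  have hSsub : S ⊆ Set.range s := by
    intro i hi
    by_contra hri
    simp only [Set.mem_range, not_exists] at hri
    have hconst := key i 0 (Nat.zero_le n) n (Nat.zero_le n) le_rfl
      (fun m _ _ heq => hri m heq.symm)
    have hni : ¬(f i (δ 0) < c i ↔ f i (δ (Fin.last n)) < c i) := by
      have := (sign_iff_aux (hne 0 i) (hne (Fin.last n) i)).1 hi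
      simpa [sub_neg] using this
    exact hni hconst
  have hrange_card : (Set.range s).ncard ≤ n := by
    have hT : Set.range s = ↑(Finset.image s Finset.univ) := by simp
    rw [hT, Set.ncard_coe_finset]
    calc (Finset.image s Finset.univ).card ≤ Finset.univ.card := Finset.card_image_le
      _ = n := by simp
  have hsinj : Function.Injective s := by
    have hT : Set.range s = ↑(Finset.image s Finset.univ) := by simp
    have hcard2 : S.ncard ≤ (Set.range s).ncard :=
      Set.ncard_le_ncard hSsub (Set.finite_range s)
    have hcard : (Set.range s).ncard = n := le_antisymm hrange_card (le_of_eq_of_le hmin.symm hcard2)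
    have heq : (Finset.image s Finset.univ).card = (Finset.univ : Finset (Fin n)).card := by
      have h2 : (Finset.image s Finset.univ).card = n := by
        rw [← Set.ncard_coe_finset (Finset.image s Finset.univ), ← hT, hcard]
      rw [h2]
      simp
    have hinj := Finset.card_image_iff.1 heq
    exact fun a b hab => hinj (Finset.mem_coe.2 (Finset.mem_univ a))
      (Finset.mem_coe.2 (Finset.mem_univ b)) hab
  have hSeq : S = Set.range s :=
    Set.eq_of_subset_of_ncard_le hSsub (by rw [hmin]; exact hrange_card)
      (Set.finite_range s)
  intro k j
  have hkS : s k ∈ S := hSeq ▸ Set.mem_range_self k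
  have hflip : ¬(f (s k) (δ 0) < c (s k) ↔ f (s k) (δ (Fin.last n)) < c (s k)) := by
    have := (sign_iff_aux (hne 0 (s k)) (hne (Fin.last n) (s k))).1 hkS
    simpa [sub_neg] using this
  constructor
  · intro hjk
    have h1 := key (s k) 0 (Nat.zero_le n) (j : ℕ) (Nat.zero_le _) (Nat.lt_succ_iff.1 j.isLt)
      (fun m _ h2 heq => by
        have hm := hsinj heq
        subst hm
        omega)
    exact h1.symm
  · intro hkj
    have h1 := key (s k) (j : ℕ) (Nat.lt_succ_iff.1 j.isLt) n (Nat.lt_succ_iff.1 j.isLt) le_rfl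
      (fun m h1 _ heq => by
        have hm := hsinj heq
        subst hm
        omega)
    exact h1
end

section
/- For the quiver variety datum of the Jordan quiver with v = n, w = 1 (Hilbert scheme of n points in ℂ²): let the weight multiset in ℝⁿ consist of ±e_i (1 ≤ i ≤ n) and e_i − e_j with multiplicity 2 (1 ≤ i ≠ j ≤ n), and let Σ̄ be the Minkowski sum of the segments [−e_i, e_i] and [2e_i − 2e_j, 2e_j − 2e_i] for i < j. Then the defining inequalities of Σ̄ are exactly |Σ_{i∈S} x_i| ≤ c_S for all nonempty subsets S ⊆ {1,…,n}, where c_S = |S| + 2|S|(n − |S|) and x_i are the coordinate functionals. -/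
/-!
`Σ̄` is the zonotope generated by the `eᵢ` and the `2 (eᵢ - eⱼ)`, `i < j`. Its support function
is `h(f) = ∑ᵢ |fᵢ| + 2 ∑_{i<j} |fᵢ - fⱼ|`, and `h(±1_S) = c_S`. By Hahn–Banach, `x ∈ Σ̄` as soon
as `f ⬝ᵥ x ≤ h(f)` for every `f`. Since `h` is additive on vectors that are monotone functions of
one another, the layer-cake decomposition of `f` into multiples of indicator vectors `1_P`, `1_N`
reduces this to the inequalities `|∑_{i∈S} xᵢ| ≤ c_S`. The face on which `∑_{i∈S} xᵢ` is maximal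
is stable under translation by the generators killed by this functional (`eᵢ` for `i ∉ S`,
`eᵢ - eⱼ` for `i, j ∈ S`), and these span the hyperplane `∑_{i∈S} xᵢ = 0`.
-/

open Finset

section Zonotope

variable {ι E : Type*} [Fintype ι] [AddCommGroup E] [Module ℝ E]

def zonotope (v : ι → E) : Set E :=
  Fintype.linearCombination ℝ v '' Set.univ.pi fun _ => Set.Icc (-1) 1

theorem mem_zonotope {v : ι → E} {x : E} :
    x ∈ zonotope v ↔ ∃ a : ι → ℝ, (∀ k, a k ∈ Set.Icc (-1) 1) ∧ ∑ k, a k • v k = x := by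
  simp only [zonotope, Set.mem_image, Set.mem_univ_pi, Fintype.linearCombination_apply]

theorem convex_zonotope (v : ι → E) : Convex ℝ (zonotope v) :=
  (convex_pi fun _ _ => convex_Icc _ _).linear_image _

theorem isCompact_zonotope [TopologicalSpace E] [IsTopologicalAddGroup E] [ContinuousSMul ℝ E]
    (v : ι → E) : IsCompact (zonotope v) := by
  refine (isCompact_univ_pi fun _ => isCompact_Icc).image ?_
  exact (Fintype.linearCombination ℝ v).continuous_of_finiteDimensional

theorem abs_apply_le_of_mem_zonotope (φ : E →ₗ[ℝ] ℝ) {v : ι → E} {x : E}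
    (hx : x ∈ zonotope v) : |φ x| ≤ ∑ k, |φ (v k)| := by
  obtain ⟨a, ha, rfl⟩ := mem_zonotope.1 hx
  calc |φ (∑ k, a k • v k)| ≤ ∑ k, |a k| * |φ (v k)| := by
        simpa [abs_mul] using abs_sum_le_sum_abs (fun k => a k * φ (v k)) univ
    _ ≤ ∑ k, |φ (v k)| := by
        gcongr with k
        exact mul_le_of_le_one_left (abs_nonneg _) (abs_le.2 (ha k))

theorem sign_sum_mem_zonotope (φ : E →ₗ[ℝ] ℝ) (v : ι → E) :
    ∑ k, (SignType.sign (φ (v k)) : ℝ) • v k ∈ zonotope v := by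
  refine mem_zonotope.2 ⟨_, fun k => ?_, rfl⟩
  rcases lt_trichotomy (φ (v k)) 0 with h | h | h <;> simp [h]

theorem apply_sign_sum (φ : E →ₗ[ℝ] ℝ) (v : ι → E) :
    φ (∑ k, (SignType.sign (φ (v k)) : ℝ) • v k) = ∑ k, |φ (v k)| := by
  simp [sign_mul_self]

theorem mem_zonotope_iff_forall_le [TopologicalSpace E] [IsTopologicalAddGroup E]
    [ContinuousSMul ℝ E] [LocallyConvexSpace ℝ E] [T2Space E] {v : ι → E} {x : E} :
    x ∈ zonotope v ↔ ∀ φ : StrongDual ℝ E, φ x ≤ ∑ k, |φ (v k)| := by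
  refine ⟨fun hx φ => (le_abs_self _).trans (abs_apply_le_of_mem_zonotope φ.toLinearMap hx),
    fun h => ?_⟩
  by_contra hx
  obtain ⟨φ, u, hφZ, hφx⟩ := geometric_hahn_banach_closed_point (convex_zonotope v)
    (isCompact_zonotope v).isClosed hx
  have hmax := apply_sign_sum φ.toLinearMap v
  simp only [ContinuousLinearMap.coe_coe] at hmax
  linarith [h φ, hmax ▸ hφZ _ (sign_sum_mem_zonotope φ.toLinearMap v)]

theorem mem_span_sub_face_of_apply_eq_zero (φ : E →ₗ[ℝ] ℝ) (v : ι → E) {k : ι}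
    (hk : φ (v k) = 0) :
    v k ∈ Submodule.span ℝ {z | ∃ x ∈ {y ∈ zonotope v | φ y = ∑ l, |φ (v l)|},
      ∃ y ∈ {y ∈ zonotope v | φ y = ∑ l, |φ (v l)|}, z = x - y} := by
  classical
  set a : ι → ℝ := fun l => SignType.sign (φ (v l))
  set b : ι → ℝ := a + Pi.single k 1
  have hshift : ∑ l, b l • v l = ∑ l, a l • v l + v k := by
    simp [b, add_smul, sum_add_distrib, Pi.single_apply]
  refine Submodule.subset_span ⟨_, ⟨mem_zonotope.2 ⟨b, fun l => ?_, rfl⟩, ?_⟩,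
    _, ⟨sign_sum_mem_zonotope φ v, apply_sign_sum φ v⟩, ?_⟩
  · rcases eq_or_ne l k with rfl | hl
    · simp [b, a, hk]
    · rcases lt_trichotomy (φ (v l)) 0 with h | h | h <;> simp [b, a, h, hl]
  · rw [hshift, map_add, hk, add_zero, apply_sign_sum]
  · rw [hshift, add_sub_cancel_left]

end Zonotope

theorem sum_eq_sum_filter_lt_add {α M : Type*} [Fintype α] [LinearOrder α] [AddCommMonoid M]
    (g : α → α → M) (hg : ∀ i, g i i = 0) :
    ∑ i, ∑ j, g i j = ∑ p ∈ univ.filter (fun p : α × α => p.1 < p.2), (g p.1 p.2 + g p.2 p.1) := by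
  have hsplit : ∀ i j, g i j = (if i < j then g i j else 0) + (if j < i then g i j else 0) := by
    intro i j
    rcases lt_trichotomy i j with h | rfl | h
    · simp [h, h.not_gt]
    · simp [hg]
    · simp [h, h.not_gt]
  rw [sum_filter, Fintype.sum_prod_type,
    sum_congr rfl fun i _ => sum_congr rfl fun j _ => hsplit i j]
  simp only [sum_add_distrib, ite_add_zero]
  rw [sum_comm (f := fun i j => if j < i then g i j else 0)]

theorem indicator_dotProduct {ι : Type*} [Fintype ι] (S : Finset ι) (x : ι → ℝ) :
    Set.indicator (S : Set ι) 1 ⬝ᵥ x = ∑ i ∈ S, x i := by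
  classical
  simp [dotProduct, Set.indicator_apply]

section JordanZonotope

variable {n : ℕ}

/-- The segment `[2eᵢ - 2eⱼ, 2eⱼ - 2eᵢ]` of a pair `i < j` is generated by `2 (eᵢ - eⱼ)`; the
pairs with `j ≤ i` get the generator `0`, so that the index type is a plain product. -/
def jordanGen (n : ℕ) : Fin n ⊕ (Fin n × Fin n) → Fin n → ℝ
  | .inl i => Pi.single i 1
  | .inr p => if p.1 < p.2 then (2 : ℝ) • (Pi.single p.1 1 - Pi.single p.2 1) else 0

@[simp]
theorem dotProduct_jordanGen_inl (f : Fin n → ℝ) (i : Fin n) :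
    f ⬝ᵥ jordanGen n (.inl i) = f i := by
  simp [jordanGen]

@[simp]
theorem dotProduct_jordanGen_inr (f : Fin n → ℝ) (p : Fin n × Fin n) :
    f ⬝ᵥ jordanGen n (.inr p) = if p.1 < p.2 then 2 * (f p.1 - f p.2) else 0 := by
  by_cases h : p.1 < p.2 <;> simp [jordanGen, h, dotProduct_sub]

/-- The support function `f ↦ max_{x ∈ Σ̄} f ⬝ᵥ x` of the zonotope (`apply_sign_sum`). -/
def jordanSupport (f : Fin n → ℝ) : ℝ := ∑ k, |f ⬝ᵥ jordanGen n k|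

theorem jordanSupport_smul (c : ℝ) (f : Fin n → ℝ) :
    jordanSupport (c • f) = |c| * jordanSupport f := by
  simp only [jordanSupport, smul_dotProduct, smul_eq_mul, abs_mul, ← mul_sum]

/-- Two monotone functions of the entries of `f` pair with each generator with the same sign. -/
theorem jordanSupport_add_of_monotoneOn {s : Set ℝ} {F G : ℝ → ℝ} (hF : MonotoneOn F s)
    (hG : MonotoneOn G s) (hs : 0 ∈ s) (hF0 : F 0 = 0) (hG0 : G 0 = 0) {f : Fin n → ℝ}
    (hf : ∀ i, f i ∈ s) :
    jordanSupport (F ∘ f + G ∘ f) = jordanSupport (F ∘ f) + jordanSupport (G ∘ f) := by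
  rw [jordanSupport, jordanSupport, jordanSupport, ← sum_add_distrib]
  refine sum_congr rfl fun k _ => ?_
  rw [add_dotProduct, abs_add_eq_add_abs_iff, ← mul_nonneg_iff]
  rcases k with i | ⟨i, j⟩
  · simpa [hF0, hG0] using (hF.monovaryOn hG).sub_mul_sub_nonneg hs (hf i)
  · simp only [dotProduct_jordanGen_inr]
    split_ifs
    · simp only [Function.comp_apply]
      nlinarith [(hF.monovaryOn hG).sub_mul_sub_nonneg (hf j) (hf i)]
    · simp

theorem jordanSupport_indicator (S : Finset (Fin n)) :
    jordanSupport (Set.indicator (S : Set (Fin n)) 1) =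
      (S.card : ℝ) + 2 * S.card * ((n : ℝ) - S.card) := by
  set a : Fin n → ℝ := Set.indicator (S : Set (Fin n)) 1
  have hsum : ∑ i, a i = S.card := by simp [a, Set.indicator_apply]
  have habs : ∀ i, |a i| = a i := fun i => by by_cases h : i ∈ S <;> simp [a, h]
  have habs_sub : ∀ i j, |a i - a j| = a i + a j - 2 * (a i * a j) := fun i j => by
    by_cases hi : i ∈ S <;> by_cases hj : j ∈ S <;> norm_num [a, hi, hj]
  have hpairs : ∑ p : Fin n × Fin n, |if p.1 < p.2 then 2 * (a p.1 - a p.2) else 0| =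
      ∑ i, ∑ j, |a i - a j| := by
    rw [sum_eq_sum_filter_lt_add _ fun i => by simp, sum_filter]
    refine sum_congr rfl fun p _ => ?_
    split_ifs
    · rw [abs_mul, abs_two, abs_sub_comm (a p.2), two_mul]
    · exact abs_zero
  rw [jordanSupport, Fintype.sum_sum_type]
  simp only [dotProduct_jordanGen_inl, dotProduct_jordanGen_inr, habs, hsum, hpairs, habs_sub,
    sum_sub_distrib, sum_add_distrib, sum_const, card_univ, Fintype.card_fin, nsmul_eq_mul,
    ← mul_sum, ← sum_mul]
  ring

theorem monotoneOn_sub_layer {t : ℝ} (ht : 0 < t) :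
    MonotoneOn (fun a => a - (if 0 < a then t else 0) - (if a < 0 then -t else 0))
      {a | a = 0 ∨ t ≤ |a|} := by
  intro a ha b hb hab
  rw [Set.mem_ofPred_eq, le_abs'] at ha hb
  dsimp only
  split_ifs <;> rcases ha with ha | ha | ha <;> rcases hb with hb | hb | hb <;> linarith

theorem smul_indicator_dotProduct_le {x : Fin n → ℝ}
    (hx : ∀ S : Finset (Fin n), |∑ i ∈ S, x i| ≤ jordanSupport (Set.indicator (S : Set (Fin n)) 1))
    (S : Finset (Fin n)) (c : ℝ) :
    (c • Set.indicator (S : Set (Fin n)) 1) ⬝ᵥ x ≤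
      jordanSupport (c • Set.indicator (S : Set (Fin n)) 1) := by
  rw [smul_dotProduct, indicator_dotProduct, jordanSupport_smul, smul_eq_mul]
  exact (le_abs_self _).trans (abs_mul c _ ▸ mul_le_mul_of_nonneg_left (hx S) (abs_nonneg c))

/-- `g` is `f` minus the layer `t • 1_P - t • 1_N`, where `t` is the smallest nonzero `|fᵢ|` and
`P`, `N` are the positive and negative entries of `f`; layer and remainder are monotone functions
of `f`, so `jordanSupport` splits additively. -/
theorem exists_peel_layer {x : Fin n → ℝ}
    (hx : ∀ S : Finset (Fin n), |∑ i ∈ S, x i| ≤ jordanSupport (Set.indicator (S : Set (Fin n)) 1))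
    {f : Fin n → ℝ} (hf0 : f ≠ 0) :
    ∃ g : Fin n → ℝ, (∀ i, f i = 0 → g i = 0) ∧ (∃ j, f j ≠ 0 ∧ g j = 0) ∧
      (g ⬝ᵥ x ≤ jordanSupport g → f ⬝ᵥ x ≤ jordanSupport f) := by
  obtain ⟨j, hj⟩ := Function.ne_iff.1 hf0
  obtain ⟨j₀, hj₀, hmin⟩ := (univ.filter (f · ≠ 0)).exists_min_image (|f ·|) ⟨j, by simpa using hj⟩
  simp only [mem_filter, mem_univ, true_and] at hj₀ hmin
  set t := |f j₀|
  have ht : 0 < t := abs_pos.2 hj₀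
  set F₁ : ℝ → ℝ := fun a => if 0 < a then t else 0
  set F₂ : ℝ → ℝ := fun a => if a < 0 then -t else 0
  set G : ℝ → ℝ := fun a => a - F₁ a - F₂ a
  have hF₁ : Monotone F₁ := fun a b hab => by dsimp only [F₁]; split_ifs <;> linarith
  have hF₂ : Monotone F₂ := fun a b hab => by dsimp only [F₂]; split_ifs <;> linarith
  have hf : ∀ i, f i ∈ {a : ℝ | a = 0 ∨ t ≤ |a|} := fun i => by
    by_cases h : f i = 0
    exacts [Or.inl h, Or.inr (hmin i h)]
  have hsplit : f = (F₁ ∘ f + F₂ ∘ f) + G ∘ f := by funext i; simp [G]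
  have hsupp : jordanSupport f =
      jordanSupport (F₁ ∘ f) + jordanSupport (F₂ ∘ f) + jordanSupport (G ∘ f) := by
    rw [← jordanSupport_add_of_monotoneOn (hF₁.monotoneOn _) (hF₂.monotoneOn _) (Set.mem_univ 0)
      (by simp [F₁]) (by simp [F₂]) (fun _ => Set.mem_univ _)]
    conv_lhs => rw [hsplit]
    exact jordanSupport_add_of_monotoneOn (F := F₁ + F₂) ((hF₁.add hF₂).monotoneOn _)
      (monotoneOn_sub_layer ht) (Or.inl rfl) (by simp [F₁, F₂]) (by simp) hf
  have hdot : f ⬝ᵥ x = (F₁ ∘ f) ⬝ᵥ x + (F₂ ∘ f) ⬝ᵥ x + (G ∘ f) ⬝ᵥ x := by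
    conv_lhs => rw [hsplit]
    rw [add_dotProduct, add_dotProduct]
  have hP : F₁ ∘ f = t • Set.indicator (univ.filter (0 < f ·) : Set (Fin n)) 1 := by
    funext i; by_cases h : 0 < f i <;> simp [F₁, h]
  have hN : F₂ ∘ f = (-t) • Set.indicator (univ.filter (f · < 0) : Set (Fin n)) 1 := by
    funext i; by_cases h : f i < 0 <;> simp [F₂, h]
  refine ⟨G ∘ f, fun i hi => by simp [G, F₁, F₂, hi], ⟨j₀, hj₀, ?_⟩, fun hg => ?_⟩
  · rcases lt_or_gt_of_ne hj₀ with h | h <;>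
      simp [G, F₁, F₂, t, h, abs_of_neg, abs_of_pos, h.not_gt]
  · rw [hsupp, hdot, hP, hN]
    exact add_le_add (add_le_add (smul_indicator_dotProduct_le hx _ t)
      (smul_indicator_dotProduct_le hx _ (-t))) hg

theorem dotProduct_le_jordanSupport {x : Fin n → ℝ}
    (hx : ∀ S : Finset (Fin n), |∑ i ∈ S, x i| ≤ jordanSupport (Set.indicator (S : Set (Fin n)) 1))
    (f : Fin n → ℝ) : f ⬝ᵥ x ≤ jordanSupport f := by
  suffices ∀ s : Finset (Fin n), ∀ f : Fin n → ℝ, (∀ i ∉ s, f i = 0) →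
      f ⬝ᵥ x ≤ jordanSupport f from this univ f (by simp)
  intro s
  induction s using Finset.strongInduction with
  | H s ih =>
  intro f hfs
  by_cases hf0 : f = 0
  · simp [hf0, jordanSupport]
  obtain ⟨g, hgf, ⟨j, hj, hgj⟩, hstep⟩ := exists_peel_layer hx hf0
  have hjs : j ∈ s := by by_contra h; exact hj (hfs j h)
  refine hstep (ih _ (erase_ssubset hjs) g fun i hi => ?_)
  rcases eq_or_ne i j with rfl | hij
  exacts [hgj, hgf i (hfs i fun his => hi (mem_erase.2 ⟨hij, his⟩))]

theorem zonotope_jordanGen :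
    zonotope (jordanGen n) = {x : Fin n → ℝ | ∃ a : Fin n → ℝ, ∃ b : Fin n → Fin n → ℝ,
      (∀ i, a i ∈ Set.Icc (-1 : ℝ) 1) ∧ (∀ i j, b i j ∈ Set.Icc (-2 : ℝ) 2) ∧
      x = (∑ i, a i • Pi.single i 1) +
        ∑ p ∈ Finset.univ.filter (fun p : Fin n × Fin n => p.1 < p.2),
          b p.1 p.2 • (Pi.single p.1 1 - Pi.single p.2 1)} := by
  ext x
  simp only [mem_zonotope, Fintype.sum_sum_type, Set.mem_ofPred_eq, sum_filter, Set.mem_Icc]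
  constructor
  · rintro ⟨c, hc, rfl⟩
    refine ⟨fun i => c (.inl i), fun i j => 2 * c (.inr (i, j)), fun i => hc _,
      fun i j => ⟨by linarith [(hc (.inr (i, j))).1], by linarith [(hc (.inr (i, j))).2]⟩, ?_⟩
    congr 1
    refine sum_congr rfl fun p _ => ?_
    split_ifs <;> simp [jordanGen, *, smul_smul, mul_comm]
  · rintro ⟨a, b, ha, hb, rfl⟩
    refine ⟨Sum.elim a fun p => b p.1 p.2 / 2, ?_, ?_⟩
    · rintro (i | p)
      · exact ha i
      · simp only [Sum.elim_inr]
        constructor <;> linarith [(hb p.1 p.2).1, (hb p.1 p.2).2]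
    · congr 1
      refine sum_congr rfl fun p _ => ?_
      split_ifs <;> simp [jordanGen, *, smul_smul]

noncomputable def coordSum (S : Finset (Fin n)) : Module.Dual ℝ (Fin n → ℝ) :=
  dotProductEquiv ℝ (Fin n) (Set.indicator (S : Set (Fin n)) 1)

@[simp]
theorem coordSum_apply (S : Finset (Fin n)) (y : Fin n → ℝ) : coordSum S y = ∑ i ∈ S, y i := by
  rw [coordSum, dotProductEquiv_apply_apply, indicator_dotProduct]

theorem sum_abs_coordSum_jordanGen (S : Finset (Fin n)) :
    ∑ k, |coordSum S (jordanGen n k)| = (S.card : ℝ) + 2 * S.card * ((n : ℝ) - S.card) := by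
  simp only [coordSum, dotProductEquiv_apply_apply]
  exact jordanSupport_indicator S

theorem ker_coordSum_le {S : Finset (Fin n)} {i₀ : Fin n} (hi₀ : i₀ ∈ S)
    {W : Submodule ℝ (Fin n → ℝ)} (hW : ∀ k, coordSum S (jordanGen n k) = 0 → jordanGen n k ∈ W) :
    LinearMap.ker (coordSum S) ≤ W := by
  have hout : ∀ i ∉ S, Pi.single i 1 ∈ W := fun i hi => hW (.inl i) (by simp [coordSum, hi])
  have hin : ∀ i ∈ S, Pi.single i 1 - Pi.single i₀ 1 ∈ W := by
    intro i hi
    rcases lt_trichotomy i i₀ with h | rfl | h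
    · simpa [jordanGen, h, smul_smul] using
        W.smul_mem (1 / 2 : ℝ) (hW (.inr (i, i₀)) (by simp [coordSum, h, hi, hi₀]))
    · simp
    · simpa [jordanGen, h, smul_smul] using
        W.smul_mem (-1 / 2 : ℝ) (hW (.inr (i₀, i)) (by simp [coordSum, h, hi, hi₀]))
  intro z hz
  rw [LinearMap.mem_ker, coordSum_apply] at hz
  have hdecomp :
      z = ∑ i ∈ Sᶜ, z i • Pi.single i 1 + ∑ i ∈ S, z i • (Pi.single i 1 - Pi.single i₀ 1) := by
    rw [sum_congr rfl fun i _ => smul_sub (z i) _ _, sum_sub_distrib, ← sum_smul, hz, zero_smul,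
      sub_zero, sum_compl_add_sum, ← pi_eq_sum_univ']
  rw [hdecomp]
  exact add_mem (sum_mem fun i hi => W.smul_mem _ (hout i (mem_compl.1 hi)))
    (sum_mem fun i hi => W.smul_mem _ (hin i hi))

theorem zonotope_jordanGen_eq_setOf :
    zonotope (jordanGen n) = {x : Fin n → ℝ | ∀ S : Finset (Fin n), S.Nonempty →
      |∑ i ∈ S, x i| ≤ (S.card : ℝ) + 2 * S.card * ((n : ℝ) - S.card)} := by
  ext x
  refine ⟨fun hx S _ => coordSum_apply S x ▸ sum_abs_coordSum_jordanGen S ▸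
    abs_apply_le_of_mem_zonotope _ hx, fun hx => mem_zonotope_iff_forall_le.2 fun φ => ?_⟩
  obtain ⟨f, hf⟩ := (dotProductEquiv ℝ (Fin n)).surjective φ.toLinearMap
  have hφf : ∀ y, φ y = f ⬝ᵥ y := fun y => by
    rw [← ContinuousLinearMap.coe_coe, ← hf, dotProductEquiv_apply_apply]
  simp only [hφf]
  refine dotProduct_le_jordanSupport (fun S => ?_) f
  rw [jordanSupport_indicator]
  rcases S.eq_empty_or_nonempty with rfl | hS
  · simp
  · exact hx S hS

theorem span_sub_face_jordanGen_eq_ker {S : Finset (Fin n)} (hS : S.Nonempty) :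
    Submodule.span ℝ {z | ∃ x ∈ {y ∈ zonotope (jordanGen n) |
        ∑ i ∈ S, y i = (S.card : ℝ) + 2 * S.card * ((n : ℝ) - S.card)},
      ∃ y ∈ {y ∈ zonotope (jordanGen n) |
        ∑ i ∈ S, y i = (S.card : ℝ) + 2 * S.card * ((n : ℝ) - S.card)}, z = x - y} =
      LinearMap.ker (coordSum S) := by
  obtain ⟨i₀, hi₀⟩ := hS
  simp only [← coordSum_apply, ← sum_abs_coordSum_jordanGen S]
  refine le_antisymm (Submodule.span_le.2 ?_) (ker_coordSum_le hi₀ fun k hk =>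
    mem_span_sub_face_of_apply_eq_zero _ _ hk)
  rintro z ⟨x, ⟨-, hx⟩, y, ⟨-, hy⟩, rfl⟩
  rw [SetLike.mem_coe, LinearMap.mem_ker, map_sub, hx, hy, sub_self]

theorem finrank_ker_coordSum {S : Finset (Fin n)} (hS : S.Nonempty) :
    Module.finrank ℝ (LinearMap.ker (coordSum S)) = n - 1 := by
  obtain ⟨i₀, hi₀⟩ := hS
  have hne : coordSum S ≠ 0 := fun h => by
    simpa [hi₀] using LinearMap.congr_fun h (Pi.single i₀ 1)
  have := Module.Dual.finrank_ker_add_one_of_ne_zero hne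
  rw [Module.finrank_fin_fun] at this
  omega

end JordanZonotope

/-- For the Jordan quiver datum (Hilbert scheme of `n` points in `ℂ²`), the
zonotope `Σ̄ ⊂ ℝⁿ` given as the Minkowski sum of the segments `[-eᵢ, eᵢ]` and
`[2eᵢ - 2eⱼ, 2eⱼ - 2eᵢ]` (`i < j`) has defining inequalities exactly
`|∑_{i∈S} xᵢ| ≤ c_S = |S| + 2|S|(n - |S|)` for all nonempty `S ⊆ {1,…,n}`: `Σ̄` equals the
region cut out by these inequalities, each inequality is attained, and each functional
`∑_{i∈S} xᵢ` is maximized on a facet of `Σ̄`. -/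
theorem stmt17 (n : ℕ)
    (e : Fin n → (Fin n → ℝ)) (he : ∀ i, e i = Pi.single i 1)
    (Sig : Set (Fin n → ℝ))
    (hSig : Sig = {x : Fin n → ℝ | ∃ a : Fin n → ℝ, ∃ b : Fin n → Fin n → ℝ,
      (∀ i, a i ∈ Set.Icc (-1 : ℝ) 1) ∧ (∀ i j, b i j ∈ Set.Icc (-2 : ℝ) 2) ∧
      x = (∑ i, a i • e i) +
        ∑ p ∈ Finset.univ.filter (fun p : Fin n × Fin n => p.1 < p.2),
          b p.1 p.2 • (e p.1 - e p.2)}) :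
    (Sig = {x : Fin n → ℝ | ∀ S : Finset (Fin n), S.Nonempty →
      |∑ i ∈ S, x i| ≤ (S.card : ℝ) + 2 * S.card * ((n : ℝ) - S.card)}) ∧
    (∀ S : Finset (Fin n), S.Nonempty →
      ∃ x ∈ Sig, ∑ i ∈ S, x i = (S.card : ℝ) + 2 * S.card * ((n : ℝ) - S.card)) ∧
    (∀ S : Finset (Fin n), S.Nonempty →
      Module.finrank ℝ (Submodule.span ℝ
        {z : Fin n → ℝ | ∃ x ∈ {y ∈ Sig |
            ∑ i ∈ S, y i = (S.card : ℝ) + 2 * S.card * ((n : ℝ) - S.card)},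
          ∃ y ∈ {y ∈ Sig |
            ∑ i ∈ S, y i = (S.card : ℝ) + 2 * S.card * ((n : ℝ) - S.card)},
          z = x - y}) = n - 1) := by
  simp only [he] at hSig
  rw [← zonotope_jordanGen] at hSig
  subst hSig
  refine ⟨zonotope_jordanGen_eq_setOf, fun S _ => ?_, fun S hS => ?_⟩
  · exact ⟨_, sign_sum_mem_zonotope (coordSum S) _, (coordSum_apply S _).symm.trans
      ((apply_sign_sum _ _).trans (sum_abs_coordSum_jordanGen S))⟩
  · rw [span_sub_face_jordanGen_eq_ker hS, finrank_ker_coordSum hS]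
end
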